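/- arXiv:2107.14718 — 2 statements merged into one kernel-verified Lean document; each statement's English description precedes it below -/
import Mathlib

section
/- The road space of a Suslin tree is a ccc branchwise-real tree order that admits no continuous grading. -/
/-- A partial order is rooted if it has a minimum element. -/
def IsRooted (X : Type*) [PartialOrder X] : Prop := ∃ r : X, ∀ x, r ≤ x

/-- The set of predecessors of every element is linearly ordered. -/
def DownLinear (X : Type*) [PartialOrder X] : Prop :=
  ∀ x y z : X, y ≤ x → z ≤ x → y ≤ z ∨ z ≤ y

/-- A well-stratified tree: a rooted partial order in which the set of
predecessors of every element is well-ordered. -/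
def IsWSTree (T : Type*) [PartialOrder T] : Prop :=
  IsRooted T ∧ DownLinear T ∧ ∀ x : T, (Set.Iio x).IsWF

/-- A branchwise-real tree order: a rooted partial order with linearly
ordered predecessor sets, in which every branch (maximal chain) is
order-isomorphic to a real interval, and any two elements have a meet. -/
def IsBRTO (X : Type*) [PartialOrder X] : Prop :=
  IsRooted X ∧ DownLinear X ∧
  (∀ B : Set X, IsMaxChain (· ≤ ·) B →
      ∃ I : Set ℝ, I.OrdConnected ∧ Nonempty (B ≃o I)) ∧
  (∀ x y : X, ∃ m : X, IsGLB {x, y} m)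

/-- A continuous grading: a strictly monotonic real-valued map restricting
to an order isomorphism `[x,y] → [ℓ x, ℓ y]` for all `x < y` (these intervals
are chains, so a strictly monotonic bijection between them is an order
isomorphism). -/
def IsContinuousGrading {X : Type*} [PartialOrder X] (ℓ : X → ℝ) : Prop :=
  StrictMono ℓ ∧ ∀ x y : X, x < y →
    Set.BijOn ℓ (Set.Icc x y) (Set.Icc (ℓ x) (ℓ y))

/-- An element has successor rank iff its set of strict predecessors has a
maximum, i.e. it has an immediate predecessor. -/
def SuccRank {T : Type*} [PartialOrder T] (x : T) : Prop :=
  ∃ y, y < x ∧ ∀ z, z < x → z ≤ y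

/-- The road space of a tree `T`: the suborder of the lexicographic product
`T ×ₗ (0,1]` consisting of the pairs `⟨x,t⟩` with `t = 1` or `x` of successor
rank. -/
abbrev Road (T : Type*) [PartialOrder T] : Type _ :=
  {p : T ×ₗ (Set.Ioc (0:ℝ) 1) // ((ofLex p).2 : ℝ) = 1 ∨ SuccRank (ofLex p).1}

/-!
The order of `Road T` is lexicographic, so points over comparable nodes are comparable; rootedness,
linear predecessor sets, meets and the countable chain condition pass from `T` to `Road T` through
the first coordinate. A maximal chain of `Road T` is the full preimage of a countable downward
closed chain `P` of `T`. Fix summable weights, positive on the successor nodes of `P` and zero on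
limit nodes, and send `⟨x, t⟩` to the total weight strictly below `x` plus `t` times the weight of
`x`: this is strictly monotone on the branch with order-connected image, so the branch is a real
interval. A continuous grading composed with `x ↦ ⟨x, 1⟩` would be a strictly monotone map `T → ℝ`,
which forces a tree with countable chains and antichains to be countable.
-/

lemma wellFoundedLT_of_forall_isWF_Iio {α : Type*} [Preorder α]
    (h : ∀ x : α, (Set.Iio x).IsWF) : WellFoundedLT α := by
  refine ⟨⟨fun x => (Set.WellFoundedOn.acc_iff_wellFoundedOn.out 0 2).mpr ?_⟩⟩
  rw [Relation.transGen_eq_self]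
  exact h x

lemma StrictMonoOn.le_iff_le_of_isChain {α β : Type*} [PartialOrder α] [Preorder β]
    {f : α → β} {s : Set α} (hf : StrictMonoOn f s) (hs : IsChain (· ≤ ·) s)
    {a b : α} (ha : a ∈ s) (hb : b ∈ s) : f a ≤ f b ↔ a ≤ b := by
  refine ⟨fun hab => ?_, hf.monotoneOn ha hb⟩
  by_contra hba
  have hlt : b < a := lt_of_le_not_ge ((hs.total ha hb).resolve_left hba) hba
  exact (hf hb ha hlt).not_ge hab

lemma IsMaxChain.mem_of_forall {α : Type*} {r : α → α → Prop} {s : Set α}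
    (hs : IsMaxChain r s) {a : α} (h : ∀ b ∈ s, r a b ∨ r b a) : a ∈ s :=
  hs.2 (hs.1.insert fun b hb _ => h b hb) (Set.subset_insert a s) ▸ Set.mem_insert a s

lemma tsum_indicator_mono {α : Type*} {v : α → ℝ} (hv0 : 0 ≤ v) (hv : Summable v)
    {s t : Set α} (h : s ⊆ t) : ∑' z, s.indicator v z ≤ ∑' z, t.indicator v z :=
  (hv.indicator s).tsum_le_tsum (Set.indicator_le_indicator_of_subset h hv0)
    (hv.indicator t)

lemma Set.Countable.exists_summable_pos {α : Type*} {s : Set α} (hs : s.Countable) :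
    ∃ w : α → ℝ, 0 ≤ w ∧ Summable w ∧ ∀ x ∈ s, 0 < w x := by
  obtain ⟨ε, hε, c, hc, -⟩ := hs.exists_pos_hasSum_le one_pos
  exact ⟨s.indicator ε, Set.indicator_nonneg fun x _ => (hε x).le,
    summable_subtype_iff_indicator.mp hc.summable, fun x hx => by simpa [hx] using hε x⟩

namespace DownLinear
variable {T : Type*} [PartialOrder T]

lemma isChain_Iio (hDL : DownLinear T) (x : T) : IsChain (· ≤ ·) (Set.Iio x) :=
  fun _ hy _ hz _ => hDL x _ _ (le_of_lt hy) (le_of_lt hz)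

lemma exists_succRank_between (hDL : DownLinear T) [WellFoundedLT T] {x y : T} (hxy : x < y)
    (hy : ¬ SuccRank y) : ∃ z, x < z ∧ z < y ∧ SuccRank z := by
  have le_of_not_between : ∀ u < y, ¬ (x < u ∧ u < y) → u ≤ x := fun u hu h => by
    rcases hDL y u x hu.le hxy.le with hux | hxu
    · exact hux
    · rcases hxu.lt_or_eq with hxu | rfl
      exacts [absurd ⟨hxu, hu⟩ h, le_rfl]
  have hne : ∃ z, x < z ∧ z < y := by
    by_contra! h
    exact hy ⟨x, hxy, fun u hu => le_of_not_between u hu fun hu' => h u hu'.1 hu'.2⟩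
  obtain ⟨z, ⟨hxz, hzy⟩, hmin⟩ := exists_minimal_of_wellFoundedLT _ hne
  refine ⟨z, hxz, hzy, x, hxz, fun u huz => le_of_not_between u (huz.trans hzy) fun hu => ?_⟩
  exact huz.not_ge (hmin hu huz.le)

/-- Every non-maximal `x` lies below a minimal element of `{z | q < f z}` for a rational `q`;
these minimal elements form countably many antichains and lie on countable branches. -/
lemma countable_of_strictMono [WellFoundedLT T] (hDL : DownLinear T)
    (hchain : ∀ C : Set T, IsChain (· ≤ ·) C → C.Countable)
    (hanti : ∀ A : Set T, IsAntichain (· ≤ ·) A → A.Countable) {f : T → ℝ}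
    (hf : StrictMono f) : Countable T := by
  have hcover : Set.univ ⊆ {x | IsMax x} ∪
      ⋃ q : ℚ, ⋃ z ∈ {z | Minimal (fun w => (q : ℝ) < f w) z}, Set.Iio z := by
    intro x _
    by_cases hx : IsMax x
    · exact Or.inl hx
    obtain ⟨y, hxy⟩ := not_isMax_iff.mp hx
    obtain ⟨q, hxq, hqy⟩ := exists_rat_btwn (hf hxy)
    obtain ⟨z, hzy, hz⟩ := exists_minimal_le_of_wellFoundedLT (fun w => (q : ℝ) < f w) y hqy
    have hzx : ¬ z ≤ x := fun h => (hf.monotone h).not_gt (hxq.trans hz.1)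
    have hxz : x < z := lt_of_le_not_ge ((hDL y x z hxy.le hzy).resolve_right hzx) hzx
    exact Or.inr (Set.mem_iUnion.mpr ⟨q, Set.mem_biUnion (show z ∈ {z | _} from hz) hxz⟩)
  refine Set.countable_univ_iff.mp ((Set.Countable.union ?_ ?_).mono hcover)
  · exact hanti _ fun a ha b _ hne hab => hne (hab.antisymm (ha hab))
  · exact Set.countable_iUnion fun q => (hanti _ (setOfPred_minimal_antichain _)).biUnion
      fun z _ => hchain _ (hDL.isChain_Iio z)

end DownLinear

section Weight
variable {T : Type*} [PartialOrder T] {v : T → ℝ}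

noncomputable def weightBelow (v : T → ℝ) (x : T) : ℝ := ∑' z, (Set.Iio x).indicator v z

lemma weightBelow_nonneg (hv0 : 0 ≤ v) (x : T) : 0 ≤ weightBelow v x :=
  tsum_nonneg fun z => Set.indicator_nonneg (fun z _ => hv0 z) z

lemma tsum_indicator_Iic (hv : Summable v) (x : T) :
    ∑' z, (Set.Iic x).indicator v z = weightBelow v x + v x := by
  have hsingle : ∑' z, ({x} : Set T).indicator v z = v x := by
    rw [tsum_eq_single x fun z hz => Set.indicator_of_notMem (s := {x}) hz v]
    simp
  rw [← Set.Iio_union_right, Set.indicator_union_of_disjoint (by simp),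
    (hv.indicator _).tsum_add (hv.indicator _), hsingle, weightBelow]

lemma weightBelow_add_le (hv0 : 0 ≤ v) (hv : Summable v) {x y : T} (h : x < y) :
    weightBelow v x + v x ≤ weightBelow v y := by
  rw [← tsum_indicator_Iic hv]
  exact tsum_indicator_mono hv0 hv (Set.Iic_subset_Iio.mpr h)

lemma weightBelow_le_of_forall_lt_le (hv0 : 0 ≤ v) (hv : Summable v) {x m : T}
    (hm : ∀ z < x, z ≤ m) : weightBelow v x ≤ weightBelow v m + v m := by
  rw [← tsum_indicator_Iic hv]
  exact tsum_indicator_mono hv0 hv hm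

lemma weightBelow_le_of_forall_lt (hDL : DownLinear T) (hv0 : 0 ≤ v) (hv : Summable v)
    {x : T} {c : ℝ} (hc : 0 ≤ c) (h : ∀ z < x, weightBelow v z + v z ≤ c) :
    weightBelow v x ≤ c := by
  classical
  refine Real.tsum_le_of_sum_le (fun z => Set.indicator_nonneg (fun z _ => hv0 z) z) fun s => ?_
  rcases (s.filter (· < x)).eq_empty_or_nonempty with hs | hs
  · refine (Finset.sum_eq_zero fun z hz => Set.indicator_of_notMem (fun hzx => ?_) v).trans_le hc
    simpa [hs] using Finset.mem_filter.mpr ⟨hz, hzx⟩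
  obtain ⟨m, hm, hmax⟩ := (s.filter (· < x)).exists_maximal hs
  have hmx : m < x := (Finset.mem_filter.mp hm).2
  have hlt_iff : ∀ z ∈ s, z < x ↔ z ≤ m := fun z hz =>
    ⟨fun hzx => (hDL x z m hzx.le hmx.le).elim id
      fun hmz => hmax (Finset.mem_filter.mpr ⟨hz, hzx⟩) hmz, fun hzm => hzm.trans_lt hmx⟩
  calc ∑ z ∈ s, (Set.Iio x).indicator v z = ∑ z ∈ s, (Set.Iic m).indicator v z :=
        Finset.sum_congr rfl fun z hz => by
          simp only [Set.indicator, Set.mem_Iio, Set.mem_Iic, hlt_iff z hz]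
    _ ≤ ∑' z, (Set.Iic m).indicator v z :=
        (hv.indicator _).sum_le_tsum s fun z _ => Set.indicator_nonneg (fun z _ => hv0 z) z
    _ = weightBelow v m + v m := tsum_indicator_Iic hv m
    _ ≤ c := h m hmx

end Weight

namespace Road
variable {T : Type*} [PartialOrder T] {v : T → ℝ}

def node (p : Road T) : T := (ofLex p.1).1

def param (p : Road T) : ℝ := (ofLex p.1).2

lemma param_pos (p : Road T) : 0 < p.param := (ofLex p.1).2.2.1

lemma param_le_one (p : Road T) : p.param ≤ 1 := (ofLex p.1).2.2.2

lemma param_eq_one_or_succRank (p : Road T) : p.param = 1 ∨ SuccRank p.node := p.2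

def mk (x : T) (t : ℝ) (ht : t ∈ Set.Ioc (0 : ℝ) 1) (h : t = 1 ∨ SuccRank x) : Road T :=
  ⟨toLex (x, ⟨t, ht⟩), h⟩

@[simp] lemma node_mk (x : T) (t : ℝ) (ht h) : (mk x t ht h).node = x := rfl

@[simp] lemma param_mk (x : T) (t : ℝ) (ht h) : (mk x t ht h).param = t := rfl

def top (x : T) : Road T := mk x 1 ⟨zero_lt_one, le_rfl⟩ (Or.inl rfl)

@[simp] lemma node_top (x : T) : (top x).node = x := rfl

@[simp] lemma param_top (x : T) : (top x).param = 1 := rfl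

lemma le_iff {p q : Road T} :
    p ≤ q ↔ p.node < q.node ∨ p.node = q.node ∧ p.param ≤ q.param := by
  simp [← Subtype.coe_le_coe, Prod.Lex.le_iff, node, param]

lemma lt_iff {p q : Road T} :
    p < q ↔ p.node < q.node ∨ p.node = q.node ∧ p.param < q.param := by
  simp [← Subtype.coe_lt_coe, Prod.Lex.lt_iff, node, param]

lemma node_mono : Monotone (node : Road T → T) := fun p q h => by
  rcases le_iff.mp h with h | h
  exacts [h.le, h.1.le]

lemma le_of_node_lt {p q : Road T} (h : p.node < q.node) : p ≤ q := le_iff.mpr (Or.inl h)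

lemma le_or_le_of_node {p q : Road T} (h : p.node ≤ q.node ∨ q.node ≤ p.node) :
    p ≤ q ∨ q ≤ p := by
  wlog hpq : p.node ≤ q.node generalizing p q
  · exact (this h.symm (h.resolve_left hpq)).symm
  rcases hpq.lt_or_eq with hlt | heq
  · exact Or.inl (le_of_node_lt hlt)
  · rcases le_total p.param q.param with h' | h'
    exacts [Or.inl (le_iff.mpr (Or.inr ⟨heq, h'⟩)),
      Or.inr (le_iff.mpr (Or.inr ⟨heq.symm, h'⟩))]

lemma top_strictMono : StrictMono (top : T → Road T) := fun _ _ h => lt_iff.mpr (Or.inl h)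

lemma le_top_node (p : Road T) : p ≤ top p.node := le_iff.mpr (Or.inr ⟨rfl, p.param_le_one⟩)

lemma isRooted (h : IsRooted T) : IsRooted (Road T) := by
  obtain ⟨r, hr⟩ := h
  refine ⟨top r, fun p => ?_⟩
  rcases (hr p.node).lt_or_eq with hlt | heq
  · exact le_of_node_lt hlt
  · have hp : p.param = 1 := p.param_eq_one_or_succRank.resolve_right
      fun ⟨y, hy, _⟩ => (hr y).not_gt (heq ▸ hy)
    exact le_iff.mpr (Or.inr ⟨heq, hp.ge⟩)

lemma downLinear (h : DownLinear T) : DownLinear (Road T) := fun p _ _ hq hr =>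
  le_or_le_of_node (h p.node _ _ (node_mono hq) (node_mono hr))

lemma exists_isGLB_pair (h : ∀ x y : T, ∃ m, IsGLB {x, y} m) (p q : Road T) :
    ∃ m, IsGLB {p, q} m := by
  by_cases hpq : p ≤ q
  · exact ⟨p, IsLeast.isGLB ⟨by simp, by simpa [lowerBounds] using hpq⟩⟩
  by_cases hqp : q ≤ p
  · exact ⟨q, IsLeast.isGLB ⟨by simp, by simpa [lowerBounds] using hqp⟩⟩
  have hincomp : ¬ p.node ≤ q.node ∧ ¬ q.node ≤ p.node := by
    constructor <;> intro h' <;>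
      rcases le_or_le_of_node (Or.inl h') with h'' | h'' <;> contradiction
  obtain ⟨m, hm⟩ := h p.node q.node
  have hmp : m < p.node := (hm.1 (by simp)).lt_of_ne fun h' => hincomp.1 (h' ▸ hm.1 (by simp))
  have hmq : m < q.node := (hm.1 (by simp)).lt_of_ne fun h' => hincomp.2 (h' ▸ hm.1 (by simp))
  refine ⟨top m, ?_, fun z hz => ?_⟩
  · simpa [lowerBounds] using ⟨le_of_node_lt hmp, le_of_node_lt hmq⟩
  · have hzm : z.node ≤ m := hm.2 (by
      simpa [lowerBounds] using ⟨node_mono (hz (by simp)), node_mono (hz (by simp))⟩)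
    exact z.le_top_node.trans (top_strictMono.monotone hzm)

lemma countable_of_isAntichain (h : ∀ A : Set T, IsAntichain (· ≤ ·) A → A.Countable)
    {A : Set (Road T)} (hA : IsAntichain (· ≤ ·) A) : A.Countable := by
  have hinj : Set.InjOn node A := fun p hp q hq hpq => by
    by_contra hne
    rcases le_or_le_of_node (Or.inl hpq.le) with h' | h'
    exacts [hA hp hq hne h', hA hq hp (Ne.symm hne) h']
  refine (Set.mapsTo_image node A).countable_of_injOn hinj (h _ ?_)
  rintro _ ⟨p, hp, rfl⟩ _ ⟨q, hq, rfl⟩ hne hpq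
  exact hA hp hq (fun h' => hne (h' ▸ rfl)) (le_of_node_lt (hpq.lt_of_ne hne))

lemma isChain_node_image {B : Set (Road T)} (hB : IsChain (· ≤ ·) B) :
    IsChain (· ≤ ·) (node '' B) := by
  rintro _ ⟨p, hp, rfl⟩ _ ⟨q, hq, rfl⟩ -
  rcases eq_or_ne p q with rfl | hne
  · exact Or.inl le_rfl
  · exact (hB hp hq hne).imp (fun h => node_mono h) (fun h => node_mono h)

lemma preimage_node_image {B : Set (Road T)} (hB : IsMaxChain (· ≤ ·) B) :
    node ⁻¹' (node '' B) = B := by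
  refine (Set.subset_preimage_image node B).antisymm' fun p hp =>
    hB.mem_of_forall fun q hq => ?_
  exact le_or_le_of_node (isChain_node_image hB.1 |>.total hp (Set.mem_image_of_mem node hq))

lemma isLowerSet_node_image (hDL : DownLinear T) {B : Set (Road T)}
    (hB : IsMaxChain (· ≤ ·) B) : IsLowerSet (node '' B) := by
  rintro _ y hyx ⟨p, hp, rfl⟩
  refine ⟨top y, hB.mem_of_forall fun q hq => le_or_le_of_node ?_, rfl⟩
  rcases (isChain_node_image hB.1).total (Set.mem_image_of_mem node hq) ⟨p, hp, rfl⟩ with h | h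
  · exact hDL p.node y q.node hyx h
  · exact Or.inl (hyx.trans h)

noncomputable def weight (v : T → ℝ) (p : Road T) : ℝ :=
  weightBelow v p.node + p.param * v p.node

@[simp] lemma weight_top (x : T) : weight v (top x) = weightBelow v x + v x := by
  simp [weight]

lemma weightBelow_le_weight (hv0 : 0 ≤ v) (p : Road T) : weightBelow v p.node ≤ weight v p :=
  le_add_of_nonneg_right (mul_nonneg p.param_pos.le (hv0 _))

lemma weight_le (hv0 : 0 ≤ v) (p : Road T) : weight v p ≤ weightBelow v p.node + v p.node :=
  add_le_add_right (mul_le_of_le_one_left (hv0 _) p.param_le_one) _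

lemma strictMonoOn_weight (hDL : DownLinear T) [WellFoundedLT T] (hv0 : 0 ≤ v)
    (hv : Summable v) {P : Set T} (hP : IsLowerSet P) (hvpos : ∀ x ∈ P, SuccRank x → 0 < v x) :
    StrictMonoOn (weight v) (node ⁻¹' P) := by
  intro p hp q hq hpq
  rcases lt_iff.mp hpq with hlt | ⟨heq, hparam⟩
  · by_cases hsucc : SuccRank q.node
    · calc weight v p ≤ weightBelow v p.node + v p.node := weight_le hv0 p
        _ ≤ weightBelow v q.node := weightBelow_add_le hv0 hv hlt
        _ < weight v q := lt_add_of_pos_right _ (mul_pos q.param_pos (hvpos _ hq hsucc))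
    · obtain ⟨z, hpz, hzq, hz⟩ := hDL.exists_succRank_between hlt hsucc
      calc weight v p ≤ weightBelow v p.node + v p.node := weight_le hv0 p
        _ ≤ weightBelow v z := weightBelow_add_le hv0 hv hpz
        _ < weightBelow v z + v z := lt_add_of_pos_right _ (hvpos z (hP hzq.le hq) hz)
        _ ≤ weightBelow v q.node := weightBelow_add_le hv0 hv hzq
        _ ≤ weight v q := weightBelow_le_weight hv0 q
  · have hsucc : SuccRank p.node := p.param_eq_one_or_succRank.resolve_left
      fun h => (h ▸ hparam).not_ge q.param_le_one
    have hvp : 0 < v p.node := hvpos _ hp hsucc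
    rw [weight, weight, ← heq]
    gcongr

/-- The least node `x` with `c ≤ weightBelow v x + v x` carries `c`: at a successor node `c` lies
on the segment leading up to `x`, at a limit node `weightBelow v x` is the supremum below. -/
lemma ordConnected_image_weight (hDL : DownLinear T) [WellFoundedLT T] (hv0 : 0 ≤ v)
    (hv : Summable v) {P : Set T} (hP : IsLowerSet P) (hvpos : ∀ x ∈ P, SuccRank x → 0 < v x)
    (hvlim : ∀ x, ¬ SuccRank x → v x = 0) : (weight v '' (node ⁻¹' P)).OrdConnected := by
  refine ⟨?_⟩
  rintro _ ⟨p, -, rfl⟩ _ ⟨q, hq, rfl⟩ c ⟨hpc, hcq⟩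
  have hc0 : 0 ≤ c := (weightBelow_nonneg hv0 _).trans ((weightBelow_le_weight hv0 p).trans hpc)
  obtain ⟨x, hxq, hx, hmin⟩ := exists_minimal_le_of_wellFoundedLT
    (fun z => c ≤ weightBelow v z + v z) q.node (hcq.trans (weight_le hv0 q))
  have hbelow : ∀ z < x, weightBelow v z + v z < c := fun z hzx =>
    not_le.mp fun h => hzx.not_ge (hmin h hzx.le)
  have hxP : x ∈ P := hP hxq hq
  by_cases hsucc : SuccRank x
  · obtain ⟨m, hmx, hm⟩ := id hsucc
    have hxc : weightBelow v x < c :=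
      (weightBelow_le_of_forall_lt_le hv0 hv hm).trans_lt (hbelow m hmx)
    have hvx : 0 < v x := hvpos x hxP hsucc
    have ht : (c - weightBelow v x) / v x ∈ Set.Ioc (0 : ℝ) 1 :=
      ⟨div_pos (sub_pos.mpr hxc) hvx, (div_le_one hvx).mpr (by linarith)⟩
    refine ⟨mk x _ ht (Or.inr hsucc), hxP, ?_⟩
    simp [weight, div_mul_cancel₀ _ hvx.ne']
  · refine ⟨top x, hxP, ?_⟩
    have hxc := weightBelow_le_of_forall_lt hDL hv0 hv hc0 fun z hz => (hbelow z hz).le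
    rw [hvlim x hsucc, add_zero] at hx
    rw [weight_top, hvlim x hsucc, add_zero]
    exact le_antisymm hxc hx

theorem exists_orderIso_ordConnected (hDL : DownLinear T) [WellFoundedLT T] {P : Set T}
    (hPc : P.Countable) (hPchain : IsChain (· ≤ ·) P) (hP : IsLowerSet P) :
    ∃ I : Set ℝ, I.OrdConnected ∧ Nonempty (node ⁻¹' P ≃o I) := by
  obtain ⟨w, hw0, hw, hwpos⟩ := hPc.exists_summable_pos
  set v := {x : T | SuccRank x}.indicator w
  have hv0 : 0 ≤ v := Set.indicator_nonneg fun x _ => hw0 x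
  have hv : Summable v := hw.indicator _
  have hvpos : ∀ x ∈ P, SuccRank x → 0 < v x := fun x hx hs => by simpa [v, hs] using hwpos x hx
  have hvlim : ∀ x, ¬ SuccRank x → v x = 0 := fun x hs =>
    Set.indicator_of_notMem (s := {x | SuccRank x}) hs w
  have hmono := strictMonoOn_weight hDL hv0 hv hP hvpos
  have hchain : IsChain (· ≤ ·) (node ⁻¹' P) := fun p hp q hq _ =>
    le_or_le_of_node (hPchain.total hp hq)
  refine ⟨Set.range fun p : node ⁻¹' P => weight v p, ?_, ⟨(OrderEmbedding.ofMapLEIff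
    (fun p : node ⁻¹' P => weight v p) fun p q =>
      hmono.le_iff_le_of_isChain hchain p.2 q.2).orderIso⟩⟩
  rw [← Set.image_eq_range]
  exact ordConnected_image_weight hDL hv0 hv hP hvpos hvlim

end Road

/-- The road space of a (Hausdorff) Suslin tree — a well-stratified,
uncountable, meet-semilattice tree in which all chains and all antichains
are countable — is a ccc branchwise-real tree order with no continuous
grading. -/
theorem road_space_of_suslin_tree (T : Type*) [PartialOrder T]
    (hT : IsWSTree T)
    (hH : ∀ x y : T, ∃ m : T, IsGLB {x, y} m)
    (hUnc : ¬ (Set.univ : Set T).Countable)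
    (hchain : ∀ C : Set T, IsChain (· ≤ ·) C → C.Countable)
    (hanti : ∀ A : Set T, IsAntichain (· ≤ ·) A → A.Countable) :
    IsBRTO (Road T) ∧
      (∀ A : Set (Road T), IsAntichain (· ≤ ·) A → A.Countable) ∧
      ¬ ∃ ℓ : Road T → ℝ, IsContinuousGrading ℓ := by
  obtain ⟨hroot, hDL, hWF⟩ := hT
  have := wellFoundedLT_of_forall_isWF_Iio hWF
  refine ⟨⟨Road.isRooted hroot, Road.downLinear hDL, fun B hB => ?_, Road.exists_isGLB_pair hH⟩,
    fun A hA => Road.countable_of_isAntichain hanti hA, ?_⟩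
  · have hPchain := Road.isChain_node_image hB.1
    rw [← Road.preimage_node_image hB]
    exact Road.exists_orderIso_ordConnected hDL (hchain _ hPchain) hPchain
      (Road.isLowerSet_node_image hDL hB)
  · rintro ⟨ℓ, hℓ, -⟩
    have := hDL.countable_of_strictMono hchain hanti (hℓ.comp Road.top_strictMono)
    exact hUnc Set.countable_univ
end

section
/- No Suslin tree admits a strictly monotonic map into ℝ. -/
/-- No Suslin tree — an uncountable well-stratified tree in which all chains
(in particular all branches) and all antichains are countable — admits a
strictly monotonic map into ℝ. -/
theorem suslin_tree_not_real_gradable (T : Type*) [PartialOrder T]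
    (hT : IsWSTree T)
    (hUnc : ¬ (Set.univ : Set T).Countable)
    (hchain : ∀ C : Set T, IsChain (· ≤ ·) C → C.Countable)
    (hanti : ∀ A : Set T, IsAntichain (· ≤ ·) A → A.Countable) :
    ¬ ∃ f : T → ℝ, StrictMono f := by
  rintro ⟨f, hf⟩
  obtain ⟨-, hdl, hwf⟩ := hT
  -- maximal elements
  set M : Set T := {x | ∀ y, ¬ x < y} with hM
  -- "jump" nodes with rational witness q
  set Dq : ℚ → Set T := fun q => {x | (∀ y, y < x → f y < (q : ℝ)) ∧ (q : ℝ) ≤ f x} with hDqdef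
  have hMc : M.Countable := by
    apply hanti
    intro a ha b hb hab hle
    exact ha b (lt_of_le_of_ne hle hab)
  have hDqc : ∀ q, (Dq q).Countable := by
    intro q
    apply hanti
    intro a ha b hb hab hle
    exact absurd (hb.1 a (lt_of_le_of_ne hle hab)) (not_lt.2 ha.2)
  have hIic : ∀ d : T, (Set.Iic d).Countable := by
    intro d
    apply hchain
    intro a ha b hb _
    exact hdl d a b ha hb
  have hcover : (Set.univ : Set T) ⊆ M ∪ ⋃ q : ℚ, ⋃ d ∈ Dq q, Set.Iic d := by
    intro x _
    by_cases hx : x ∈ M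
    · exact Or.inl hx
    · right
      have hx' : ∃ y, x < y := by
        by_contra h
        push_neg at h
        exact hx (fun y hy => (h y) hy)
      obtain ⟨y, hxy⟩ := hx'
      set W : Set T := {z | x < z ∧ z ≤ y} with hW
      have hWwf : W.IsWF := by
        refine Set.IsWF.mono ((hwf y).insert y) ?_
        intro z hz
        rcases lt_or_eq_of_le hz.2 with h | h
        · exact Set.mem_insert_of_mem _ h
        · exact h ▸ Set.mem_insert _ _
      have hWne : W.Nonempty := ⟨y, hxy, le_refl y⟩
      set m := hWwf.min hWne with hm
      have hmW : m ∈ W := hWwf.min_mem hWne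
      have hxm : x < m := hmW.1
      have hbelow : ∀ z, z < m → z ≤ x := by
        intro z hz
        rcases hdl m z x hz.le hxm.le with h | h
        · exact h
        · rcases eq_or_lt_of_le h with h' | h'
          · exact h'.symm.le
          · exact absurd hz (hWwf.not_lt_min hWne ⟨h', hz.le.trans hmW.2⟩)
      obtain ⟨q, hq1, hq2⟩ := exists_rat_btwn (hf hxm)
      have hmem : m ∈ Dq q := by
        refine ⟨fun z hz => lt_of_le_of_lt (hf.monotone (hbelow z hz)) hq1, hq2.le⟩
      exact Set.mem_iUnion.2 ⟨q, Set.mem_iUnion₂.2 ⟨m, hmem, hxm.le⟩⟩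
  have hbig : (M ∪ ⋃ q : ℚ, ⋃ d ∈ Dq q, Set.Iic d).Countable :=
    hMc.union (Set.countable_iUnion fun q => (hDqc q).biUnion fun d _ => hIic d)
  exact hUnc (hbig.mono hcover)
end
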